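/- Let 0 < a < 1, b a natural number with a·b ≥ 1, and N ≥ 1 a natural number. The supremum, over all f of the form f(x) = ∑_{n=N}^{∞} a^{n/2}(c_n cos(bⁿπx) + d_n sin(bⁿπx)) with square-summable coefficients satisfying ∑_{n=N}^{∞} (c_n² + d_n²) ≤ 1, of the sup norm sup_{x∈[−1,1]} |f(x)| equals (a^N/(1 − a))^{1/2}. Equivalently, ‖I_W P_𝒱^N‖² = a^N/(1 − a). -/

import Mathlib

/-!
Since `|c cos θ + d sin θ| ≤ √(c² + d²)`, Cauchy–Schwarz against the weights `aⁿᐟ²`,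
`n ≥ N`, bounds `|f(x)|` by `(∑_{n ≥ N} aⁿ)^(1/2) ‖f‖_W`, i.e. by `(a^N / (1 - a))^(1/2) ‖f‖_W`,
at every `x`. At `x = 0` equality is attained by `dₙ = 0` and `cₙ` proportional to `aⁿᐟ²`
for `n ≥ N`.
-/

open Real

section NatShift

variable {G : Type*} [AddCommMonoid G] {f : ℕ → G} {N : ℕ}

lemma support_subset_range_add_of_eq_zero (hf : ∀ n < N, f n = 0) :
    Function.support f ⊆ Set.range (· + N) :=
  fun n hn => ⟨n - N, Nat.sub_add_cancel (not_lt.mp fun h => hn (hf n h))⟩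

lemma hasSum_nat_add_iff_of_eq_zero [TopologicalSpace G] (hf : ∀ n < N, f n = 0) {g : G} :
    HasSum (fun k => f (k + N)) g ↔ HasSum f g :=
  (add_left_injective N).hasSum_iff fun _ hn =>
    Function.notMem_support.mp fun h => hn (support_subset_range_add_of_eq_zero hf h)

lemma tsum_nat_add_of_eq_zero [TopologicalSpace G] (hf : ∀ n < N, f n = 0) :
    ∑' k, f (k + N) = ∑' n, f n :=
  (add_left_injective N).tsum_eq (support_subset_range_add_of_eq_zero hf)

end NatShift

lemma hasSum_geometric_nat_add {a : ℝ} (ha0 : 0 ≤ a) (ha1 : a < 1) (N : ℕ) :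
    HasSum (fun k : ℕ => a ^ (k + N)) (a ^ N / (1 - a)) := by
  simpa only [pow_add, mul_comm, div_eq_mul_inv] using
    (hasSum_geometric_of_lt_one ha0 ha1).mul_left (a ^ N)

lemma rpow_natCast_div_two_sq {a : ℝ} (ha : 0 ≤ a) (n : ℕ) :
    (a ^ ((n : ℝ) / 2)) ^ 2 = a ^ n := by
  rw [← rpow_natCast (a ^ _), ← rpow_mul ha]
  norm_num

lemma abs_mul_cos_add_mul_sin_le (c d θ : ℝ) :
    |c * cos θ + d * sin θ| ≤ √(c ^ 2 + d ^ 2) := by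
  rw [← sqrt_sq_eq_abs]
  gcongr
  nlinarith [sq_nonneg (c * sin θ - d * cos θ), sin_sq_add_cos_sq θ]

lemma summable_and_abs_tsum_le_of_abs_le_mul {ι : Type*} {F u v : ι → ℝ}
    (hu : ∀ i, 0 ≤ u i) (hv : ∀ i, 0 ≤ v i) (hF : ∀ i, |F i| ≤ u i * v i)
    (hu2 : Summable fun i => u i ^ 2) (hv2 : Summable fun i => v i ^ 2) :
    Summable F ∧ |∑' i, F i| ≤ √(∑' i, u i ^ 2) * √(∑' i, v i ^ 2) := by
  obtain ⟨huv, hle⟩ := summable_and_inner_le_Lp_mul_Lq_tsum_of_nonneg .two_two hu hv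
    (by simpa only [rpow_two] using hu2) (by simpa only [rpow_two] using hv2)
  simp only [rpow_two, ← sqrt_eq_rpow] at hle
  have hFabs : Summable fun i => |F i| := huv.of_nonneg_of_le (fun i => abs_nonneg _) hF
  refine ⟨hFabs.of_abs, ?_⟩
  calc |∑' i, F i| ≤ ∑' i, |F i| := by
        simpa only [norm_eq_abs] using
          norm_tsum_le_tsum_norm (f := F) (by simpa only [norm_eq_abs])
    _ ≤ ∑' i, u i * v i := hFabs.tsum_le_tsum hF huv
    _ ≤ _ := hle

/-- The element of `ℋ_W` with coordinates `(cₙ, dₙ)`, evaluated at `x`. -/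
noncomputable def weierstrassSeries (a : ℝ) (b : ℕ) (c d : ℕ → ℝ) (x : ℝ) : ℝ :=
  ∑' n : ℕ, a ^ ((n : ℝ) / 2) *
    (c n * cos ((b : ℝ) ^ n * π * x) + d n * sin ((b : ℝ) ^ n * π * x))

lemma weierstrassSeries_zero (a : ℝ) (b : ℕ) (c d : ℕ → ℝ) :
    weierstrassSeries a b c d 0 = ∑' n : ℕ, a ^ ((n : ℝ) / 2) * c n := by
  simp [weierstrassSeries]

lemma abs_weierstrassSeries_le {a : ℝ} (ha0 : 0 < a) (ha1 : a < 1) (b : ℕ) {N : ℕ}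
    {c d : ℕ → ℝ} (hs : Summable fun n => c n ^ 2 + d n ^ 2)
    (hz : ∀ n < N, c n = 0 ∧ d n = 0) (x : ℝ) :
    |weierstrassSeries a b c d x| ≤ √(a ^ N / (1 - a)) * √(∑' n, (c n ^ 2 + d n ^ 2)) := by
  set F : ℕ → ℝ := fun n => a ^ ((n : ℝ) / 2) *
    (c n * cos ((b : ℝ) ^ n * π * x) + d n * sin ((b : ℝ) ^ n * π * x))
  set s : ℕ → ℝ := fun n => c n ^ 2 + d n ^ 2
  have hF : ∑' k, F (k + N) = weierstrassSeries a b c d x :=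
    tsum_nat_add_of_eq_zero fun n hn => by simp [F, hz n hn]
  have hs' : ∑' k, s (k + N) = ∑' n, s n :=
    tsum_nat_add_of_eq_zero fun n hn => by simp [s, hz n hn]
  have hsq : ∀ n, (√(s n)) ^ 2 = s n := fun n => sq_sqrt (by positivity)
  have hgeom := hasSum_geometric_nat_add ha0.le ha1 N
  have hCS := summable_and_abs_tsum_le_of_abs_le_mul (F := fun k => F (k + N))
    (u := fun k => a ^ (((k + N : ℕ) : ℝ) / 2)) (v := fun k => √(s (k + N)))
    (fun k => by positivity) (fun k => sqrt_nonneg _)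
    (fun k => by
      rw [abs_mul, abs_of_nonneg (by positivity)]
      gcongr
      exact abs_mul_cos_add_mul_sin_le _ _ _)
    (by simpa only [rpow_natCast_div_two_sq ha0.le] using hgeom.summable)
    (by simpa only [hsq] using (summable_nat_add_iff N).mpr hs)
  simpa only [rpow_natCast_div_two_sq ha0.le, hsq, hgeom.tsum_eq, hF, hs'] using hCS.2

noncomputable def weierstrassExtremalCoeff (a : ℝ) (N n : ℕ) : ℝ :=
  if n < N then 0 else a ^ ((n : ℝ) / 2) / √(a ^ N / (1 - a))

lemma weierstrassExtremalCoeff_of_lt {a : ℝ} {N n : ℕ} (h : n < N) :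
    weierstrassExtremalCoeff a N n = 0 := if_pos h

lemma weierstrassExtremalCoeff_nat_add (a : ℝ) (N k : ℕ) :
    weierstrassExtremalCoeff a N (k + N) = a ^ (((k + N : ℕ) : ℝ) / 2) / √(a ^ N / (1 - a)) :=
  if_neg (by omega)

lemma hasSum_weierstrassExtremalCoeff_sq {a : ℝ} (ha0 : 0 < a) (ha1 : a < 1) (N : ℕ) :
    HasSum (fun n => weierstrassExtremalCoeff a N n ^ 2) 1 := by
  have hM : 0 < a ^ N / (1 - a) := div_pos (pow_pos ha0 N) (sub_pos.mpr ha1)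
  rw [← hasSum_nat_add_iff_of_eq_zero fun n hn => by
    rw [weierstrassExtremalCoeff_of_lt hn, sq, mul_zero]]
  have h := (hasSum_geometric_nat_add ha0.le ha1 N).div_const (a ^ N / (1 - a))
  rw [div_self hM.ne'] at h
  simpa only [weierstrassExtremalCoeff_nat_add, div_pow, rpow_natCast_div_two_sq ha0.le,
    sq_sqrt hM.le] using h

lemma weierstrassSeries_weierstrassExtremalCoeff_zero {a : ℝ} (ha0 : 0 < a) (ha1 : a < 1)
    (b N : ℕ) :
    weierstrassSeries a b (weierstrassExtremalCoeff a N) 0 0 = √(a ^ N / (1 - a)) := by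
  have hM : 0 < a ^ N / (1 - a) := div_pos (pow_pos ha0 N) (sub_pos.mpr ha1)
  rw [weierstrassSeries_zero, ← tsum_nat_add_of_eq_zero fun n hn => by
    rw [weierstrassExtremalCoeff_of_lt hn, mul_zero]]
  convert ((hasSum_geometric_nat_add ha0.le ha1 N).div_const √(a ^ N / (1 - a))).tsum_eq using 1
  · simp only [weierstrassExtremalCoeff_nat_add, mul_div_assoc', ← sq,
      rpow_natCast_div_two_sq ha0.le]
  · rw [eq_div_iff (sqrt_pos.mpr hM).ne', ← sq, sq_sqrt hM.le]

theorem weierstrass_projection_norm_tail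
    (a : ℝ) (b : ℕ) (ha0 : 0 < a) (ha1 : a < 1) (N : ℕ) :
    sSup {y : ℝ | ∃ c d : ℕ → ℝ, Summable (fun n => c n ^ 2 + d n ^ 2) ∧
        (∀ n < N, c n = 0 ∧ d n = 0) ∧
        (∑' n : ℕ, (c n ^ 2 + d n ^ 2)) ≤ 1 ∧
        y = ⨆ x : Set.Icc (-1 : ℝ) 1,
          |∑' n : ℕ, a ^ ((n : ℝ) / 2) *
            (c n * Real.cos ((b : ℝ) ^ n * π * (x : ℝ)) +
              d n * Real.sin ((b : ℝ) ^ n * π * (x : ℝ)))|} =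
      Real.sqrt (a ^ N / (1 - a)) := by
  have hbound : ∀ c d : ℕ → ℝ, Summable (fun n => c n ^ 2 + d n ^ 2) →
      (∀ n < N, c n = 0 ∧ d n = 0) → ∑' n, (c n ^ 2 + d n ^ 2) ≤ 1 →
      ∀ x : Set.Icc (-1 : ℝ) 1, |weierstrassSeries a b c d x| ≤ √(a ^ N / (1 - a)) :=
    fun c d hs hz h1 x => (abs_weierstrassSeries_le ha0 ha1 b hs hz x).trans
      (mul_le_of_le_one_right (sqrt_nonneg _) (sqrt_le_one.mpr h1))
  have hsq : HasSum (fun n => weierstrassExtremalCoeff a N n ^ 2 + (0 : ℕ → ℝ) n ^ 2) 1 := by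
    simpa using hasSum_weierstrassExtremalCoeff_sq ha0 ha1 N
  have hz : ∀ n < N, weierstrassExtremalCoeff a N n = 0 ∧ (0 : ℕ → ℝ) n = 0 :=
    fun n hn => ⟨weierstrassExtremalCoeff_of_lt hn, rfl⟩
  have hextremal : IsGreatest (Set.range fun x : Set.Icc (-1 : ℝ) 1 =>
      |weierstrassSeries a b (weierstrassExtremalCoeff a N) 0 x|) √(a ^ N / (1 - a)) := by
    refine ⟨⟨⟨0, by norm_num⟩, ?_⟩,
      Set.forall_mem_range.2 (hbound _ _ hsq.summable hz hsq.tsum_eq.le)⟩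
    dsimp only
    rw [weierstrassSeries_weierstrassExtremalCoeff_zero ha0 ha1, abs_of_nonneg (sqrt_nonneg _)]
  refine IsGreatest.csSup_eq
    ⟨⟨_, 0, hsq.summable, hz, hsq.tsum_eq.le, hextremal.csSup_eq.symm⟩, ?_⟩
  rintro _ ⟨c, d, hs, hz, h1, rfl⟩
  have : Nonempty (Set.Icc (-1 : ℝ) 1) := ⟨⟨0, by norm_num⟩⟩
  exact ciSup_le (hbound c d hs hz h1)
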